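/- arXiv:1804.01616 — 4 statements merged into one kernel-verified Lean document; each statement's English description precedes it below -/
import Mathlib

section
/- The number of prime classical parking functions of length n is (n-1)^(n-1). -/
/-- `s ∈ [n]^n` is a classical parking function: for every `k ∈ [n]`, at least `k`
entries are `≤ k` (0-indexed via `Fin n`; spot `k` is `(k : Fin n)` with value `k-1`,
so "entry `≤ k`" reads `(s i : ℕ) < k`). -/
def IsParkingFunction {n : ℕ} (s : Fin n → Fin n) : Prop :=
  ∀ k, 1 ≤ k → k ≤ n → k ≤ (Finset.univ.filter fun i => (s i : ℕ) < k).card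

/-- A classical parking function is prime if strictly more than `k` entries are `≤ k`
for each `1 ≤ k ≤ n - 1`. -/
def IsPrimeParkingFunction {n : ℕ} (s : Fin n → Fin n) : Prop :=
  IsParkingFunction s ∧
    ∀ k, 1 ≤ k → k ≤ n - 1 → k < (Finset.univ.filter fun i => (s i : ℕ) < k).card

instance {n : ℕ} : DecidablePred (IsPrimeParkingFunction (n := n)) := fun _ => by
  unfold IsPrimeParkingFunction IsParkingFunction; infer_instance

open Finset

namespace PrimePark

variable {m : ℕ}

lemma val_eq_iff [NeZero m] {x : ZMod m} {l : ℕ} (hl : l < m) :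
    x.val = l ↔ x = (l : ZMod m) := by
  constructor
  · intro h; rw [← h, ZMod.natCast_val, ZMod.cast_id]
  · rintro rfl; exact ZMod.val_cast_of_lt hl

/-- count of entries equal to `l` mod `m` -/
def cnt (a : Fin (m+1) → ZMod m) (l : ℕ) : ℕ :=
  (univ.filter fun i => a i = (l : ZMod m)).card

def Q (a : Fin (m+1) → ZMod m) (j : ℕ) : ℕ := ∑ l ∈ range j, cnt a l

def Pz (a : Fin (m+1) → ZMod m) (j : ℕ) : ℤ := (Q a j : ℤ) - j

/-- Prime condition in ZMod form -/
def PrimeZ (a : Fin (m+1) → ZMod m) : Prop :=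
  ∀ j < m, j + 2 ≤ (univ.filter fun i => (a i).val ≤ j).card

lemma sum_cnt_period (hm : 0 < m) (a : Fin (m+1) → ZMod m) (d : ℕ) :
    ∑ l ∈ range m, cnt a (d + l) = m + 1 := by
  haveI : NeZero m := ⟨hm.ne'⟩
  have h := card_eq_sum_card_fiberwise
    (f := fun i : Fin (m+1) => (a i - (d : ZMod m)).val) (s := univ) (t := range m)
    (fun i _ => mem_range.2 (ZMod.val_lt _))
  rw [card_univ, Fintype.card_fin] at h
  rw [h]
  refine sum_congr rfl fun l hl => ?_
  rw [mem_range] at hl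
  unfold cnt
  congr 1
  refine filter_congr fun i _ => ?_
  rw [val_eq_iff hl, sub_eq_iff_eq_add]
  push_cast
  constructor <;> intro h' <;> linear_combination h'

lemma Q_add (a : Fin (m+1) → ZMod m) (j k : ℕ) :
    Q a (j + k) = Q a j + ∑ l ∈ range k, cnt a (j + l) :=
  Finset.sum_range_add (cnt a) j k

lemma Q_period (hm : 0 < m) (a : Fin (m+1) → ZMod m) (j : ℕ) :
    Q a (j + m) = Q a j + (m + 1) := by
  rw [Q_add, sum_cnt_period hm]

lemma Pz_period (hm : 0 < m) (a : Fin (m+1) → ZMod m) (j : ℕ) :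
    Pz a (j + m) = Pz a j + 1 := by
  unfold Pz
  rw [Q_period hm]
  push_cast
  ring

end PrimePark
namespace PrimePark

variable {m : ℕ}
open Finset

lemma key_card (hm : 0 < m) (a : Fin (m+1) → ZMod m) (d j : ℕ) (hj : j < m) :
    (univ.filter fun i => (a i - (d : ZMod m)).val ≤ j).card
      = ∑ l ∈ range (j+1), cnt a (d + l) := by
  haveI : NeZero m := ⟨hm.ne'⟩
  have h := card_eq_sum_card_fiberwise
    (f := fun i : Fin (m+1) => (a i - (d : ZMod m)).val)
    (s := univ.filter fun i => (a i - (d : ZMod m)).val ≤ j) (t := range (j+1))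
    (fun i hi => mem_range.2 (Nat.lt_succ_of_le (mem_filter.1 hi).2))
  rw [h]
  refine sum_congr rfl fun l hl => ?_
  rw [mem_range, Nat.lt_succ_iff] at hl
  rw [filter_filter]
  unfold cnt
  congr 1
  refine filter_congr fun i _ => ?_
  rw [val_eq_iff (lt_of_le_of_lt hl hj), sub_eq_iff_eq_add]
  push_cast
  constructor
  · rintro ⟨-, h'⟩; linear_combination h'
  · intro h'
    have h2 : a i - (d:ZMod m) = (l : ZMod m) := by linear_combination h'
    refine ⟨?_, by linear_combination h'⟩
    rw [h2, ZMod.val_cast_of_lt (lt_of_le_of_lt hl hj)]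
    exact hl

lemma primeZ_shift_iff (hm : 0 < m) (a : Fin (m+1) → ZMod m) (d : ℕ) :
    PrimeZ (fun i => a i - (d : ZMod m)) ↔
      ∀ j, 0 < j → j ≤ m → Pz a d + 1 ≤ Pz a (d + j) := by
  unfold PrimeZ
  constructor
  · intro h j hj0 hjm
    have h1 := h (j - 1) (by omega)
    rw [key_card hm a d (j-1) (by omega)] at h1
    have h3 : (j - 1) + 1 = j := by omega
    rw [h3] at h1
    set S := ∑ l ∈ range j, cnt a (d + l) with hS
    have h2 : Q a (d + j) = Q a d + S := Q_add a d j
    unfold Pz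
    omega
  · intro h j hj
    rw [key_card hm a d j hj]
    have h1 := h (j + 1) (by omega) (by omega)
    set S := ∑ l ∈ range (j+1), cnt a (d + l) with hS
    have h2 : Q a (d + (j+1)) = Q a d + S := Q_add a d (j+1)
    unfold Pz at h1
    omega

end PrimePark
namespace PrimePark

variable {m : ℕ}
open Finset

lemma core_exists (hm : 0 < m) (a : Fin (m+1) → ZMod m) :
    ∃ d < m, ∀ j, 0 < j → j ≤ m → Pz a d + 1 ≤ Pz a (d + j) := by
  -- minimum value of Pz over [0, m)
  have hne : ((range m).image (Pz a)).Nonempty :=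
    ⟨Pz a 0, mem_image_of_mem _ (mem_range.2 hm)⟩
  set v := ((range m).image (Pz a)).min' hne with hv
  have hargne : ((range m).filter fun j => Pz a j = v).Nonempty := by
    obtain ⟨j, hj, hje⟩ := mem_image.1 (min'_mem _ hne)
    exact ⟨j, mem_filter.2 ⟨hj, hje⟩⟩
  set d := ((range m).filter fun j => Pz a j = v).max' hargne with hd
  have hdmem : d ∈ (range m).filter fun j => Pz a j = v := max'_mem _ hargne
  rw [mem_filter, mem_range] at hdmem
  obtain ⟨hdm, hdv⟩ := hdmem
  refine ⟨d, hdm, fun j hj0 hjm => ?_⟩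
  have hmin : ∀ l < m, v ≤ Pz a l := fun l hl =>
    min'_le _ _ (mem_image_of_mem _ (mem_range.2 hl))
  by_cases hcase : d + j < m
  · -- strictly above the min since d is the last argmin
    have h1 : v ≤ Pz a (d + j) := hmin _ hcase
    have h2 : Pz a (d + j) ≠ v := by
      intro he
      have : d + j ≤ d := le_max' _ _ (mem_filter.2 ⟨mem_range.2 hcase, he⟩)
      omega
    omega
  · have h3 : d + j = (d + j - m) + m := by omega
    have h4 : d + j - m < m := by omega
    have h5 := Pz_period hm a (d + j - m)
    have h6 : v ≤ Pz a (d + j - m) := hmin _ h4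
    rw [h3, h5]
    omega

lemma core_unique (hm : 0 < m) (a : Fin (m+1) → ZMod m) :
    ∃! d : ZMod m, PrimeZ (fun i => a i - d) := by
  haveI : NeZero m := ⟨hm.ne'⟩
  obtain ⟨d, hdm, hd⟩ := core_exists hm a
  refine ⟨(d : ZMod m), ?_, ?_⟩
  · show PrimeZ fun i => a i - ((d : ℕ) : ZMod m)
    rw [primeZ_shift_iff hm a d]
    exact hd
  · intro e he
    -- e = (e.val : ZMod m); its val satisfies the nat condition
    have hcast : (fun i => a i - e) = fun i => a i - ((e.val : ℕ) : ZMod m) := by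
      funext i; rw [ZMod.natCast_val, ZMod.cast_id]
    rw [hcast, primeZ_shift_iff hm a e.val] at he
    -- uniqueness at the nat level
    have hvlt : e.val < m := ZMod.val_lt e
    have key : e.val = d := by
      by_contra hne
      rcases Nat.lt_or_ge e.val d with hlt | hge
      · have h1 := hd (e.val + m - d) (by omega) (by omega)
        have h2 := he (d - e.val) (by omega) (by omega)
        have h3 : e.val + (d - e.val) = d := by omega
        have h4 : d + (e.val + m - d) = e.val + m := by omega
        rw [h3] at h2
        rw [h4, Pz_period hm] at h1
        omega
      · have hlt' : d < e.val := by omega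
        have h1 := he (d + m - e.val) (by omega) (by omega)
        have h2 := hd (e.val - d) (by omega) (by omega)
        have h3 : d + (e.val - d) = e.val := by omega
        have h4 : e.val + (d + m - e.val) = d + m := by omega
        rw [h3] at h2
        rw [h4, Pz_period hm] at h1
        omega
    rw [← key, ZMod.natCast_val, ZMod.cast_id]

end PrimePark
namespace PrimePark

variable {m : ℕ}
open Finset

instance : DecidablePred (PrimeZ (m := m)) := fun _ => by
  unfold PrimeZ; infer_instance

lemma card_primeZ (hm : 0 < m) [NeZero m] :
    Fintype.card {a : Fin (m+1) → ZMod m // PrimeZ a} = m ^ m := by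
  have hbij : Function.Bijective
      (fun p : ZMod m × {a : Fin (m+1) → ZMod m // PrimeZ a} =>
        (fun i => (p.2 : Fin (m+1) → ZMod m) i + p.1 : Fin (m+1) → ZMod m)) := by
    constructor
    · rintro ⟨d, a, ha⟩ ⟨e, b, hb⟩ hab
      simp only at hab
      have hpt : ∀ i, a i + d = b i + e := fun i => congrFun hab i
      obtain ⟨c, -, huniq⟩ := core_unique hm (fun i => a i + d)
      have ha' : PrimeZ fun i => (a i + d) - d := by
        simpa using ha
      have hb' : PrimeZ fun i => (a i + d) - e := by
        simp only [hpt]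
        simpa using hb
      have hde : d = e := (huniq d ha').trans (huniq e hb').symm
      subst hde
      have hfab : a = b := by
        funext i
        have := hpt i
        simpa using this
      simp [hfab]
    · intro g
      obtain ⟨c, hc, -⟩ := core_unique hm g
      refine ⟨⟨c, ⟨fun i => g i - c, hc⟩⟩, ?_⟩
      funext i
      simp
  have hcard := Fintype.card_of_bijective hbij
  rw [Fintype.card_prod, Fintype.card_fun, ZMod.card, Fintype.card_fin] at hcard
  have h2 : m * Fintype.card {a : Fin (m+1) → ZMod m // PrimeZ a} = m * m ^ m := by
    rw [hcard, pow_succ, mul_comm]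
  exact Nat.eq_of_mul_eq_mul_left hm h2

end PrimePark
namespace PrimePark

variable {m : ℕ}
open Finset

lemma prime_iff (s : Fin (m+1) → Fin (m+1)) :
    IsPrimeParkingFunction s ↔
      ∀ k, 1 ≤ k → k ≤ m → k + 1 ≤ (univ.filter fun i => (s i : ℕ) < k).card := by
  constructor
  · intro ⟨_, h2⟩ k hk1 hkm
    exact h2 k hk1 (by omega)
  · intro h
    refine ⟨fun k hk1 hkn => ?_, fun k hk1 hkm => h k hk1 (by omega)⟩
    rcases Nat.lt_or_ge k (m+1) with hlt | hge
    · have := h k hk1 (by omega); omega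
    · have hk : k = m + 1 := by omega
      subst hk
      have : (univ.filter fun i : Fin (m+1) => (s i : ℕ) < m + 1) = univ := by
        refine eq_univ_of_forall fun i => mem_filter.2 ⟨mem_univ _, (s i).isLt⟩
      rw [this, card_univ, Fintype.card_fin]

lemma prime_all_lt {s : Fin (m+1) → Fin (m+1)} (hm : 0 < m)
    (hs : IsPrimeParkingFunction s) : ∀ i, (s i : ℕ) < m := by
  rw [prime_iff] at hs
  have h := hs m (by omega) le_rfl
  have hle : (univ.filter fun i : Fin (m+1) => (s i : ℕ) < m).card ≤ m + 1 := by
    calc _ ≤ (univ : Finset (Fin (m+1))).card := card_filter_le _ _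
    _ = m + 1 := by rw [card_univ, Fintype.card_fin]
  have huniv : (univ.filter fun i : Fin (m+1) => (s i : ℕ) < m) = univ := by
    apply eq_univ_of_card
    rw [Fintype.card_fin]; omega
  intro i
  have := mem_filter.1 (huniv ▸ mem_univ i)
  exact this.2

def primeEquiv (hm : 0 < m) [NeZero m] :
    {s : Fin (m+1) → Fin (m+1) // IsPrimeParkingFunction s} ≃
      {a : Fin (m+1) → ZMod m // PrimeZ a} where
  toFun := fun ⟨s, hs⟩ => ⟨fun i => ((s i : ℕ) : ZMod m), by
    have hlt := prime_all_lt hm hs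
    rw [prime_iff] at hs
    intro j hj
    have h := hs (j+1) (by omega) (by omega)
    have : (univ.filter fun i => (((s i : ℕ) : ZMod m)).val ≤ j)
        = univ.filter fun i => (s i : ℕ) < j + 1 := by
      refine filter_congr fun i _ => ?_
      rw [ZMod.val_cast_of_lt (hlt i)]
      omega
    rw [this]
    omega⟩
  invFun := fun ⟨a, ha⟩ => ⟨fun i => ⟨(a i).val, lt_trans (ZMod.val_lt _) (by omega)⟩, by
    rw [prime_iff]
    intro k hk1 hkm
    have h := ha (k-1) (by omega)
    have : (univ.filter fun i => ((⟨(a i).val, lt_trans (ZMod.val_lt _) (by omega)⟩ : Fin (m+1)) : ℕ) < k)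
        = univ.filter fun i => (a i).val ≤ k - 1 := by
      refine filter_congr fun i _ => ?_
      simp only
      omega
    rw [this]
    omega⟩
  left_inv := fun ⟨s, hs⟩ => by
    have hlt := prime_all_lt hm hs
    refine Subtype.ext (funext fun i => ?_)
    simp only
    exact Fin.ext (by simp [ZMod.val_cast_of_lt (hlt i)])
  right_inv := fun ⟨a, ha⟩ => by
    refine Subtype.ext (funext fun i => ?_)
    simp only
    rw [ZMod.natCast_val, ZMod.cast_id]

end PrimePark

/-- The number of prime classical parking functions of length `n`
is `(n-1)^(n-1)`. -/
theorem card_prime_parking_functions (n : ℕ) (hn : 1 ≤ n) :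
    Fintype.card {s : Fin n → Fin n // IsPrimeParkingFunction s} = (n - 1) ^ (n - 1) := by
  obtain ⟨m, rfl⟩ : ∃ m, n = m + 1 := ⟨n - 1, by omega⟩
  simp only [Nat.add_sub_cancel]
  rcases Nat.eq_zero_or_pos m with rfl | hm
  · rw [pow_zero, Fintype.card_eq_one_iff]
    refine ⟨⟨fun _ => 0, ?_, ?_⟩, fun y => Subtype.ext (funext fun i => Fin.fin_one_eq_zero _ ▸ (Fin.fin_one_eq_zero _).symm)⟩
    · intro k hk1 hkn
      interval_cases k
      simp [Finset.filter_true_of_mem]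
    · intro k hk1 hkm
      omega
  · haveI : NeZero m := ⟨hm.ne'⟩
    rw [Fintype.card_congr (PrimePark.primeEquiv hm), PrimePark.card_primeZ hm]
end

section
/- Let T be a rooted tree on vertex set [n] with edges oriented toward the root, and for a vertex v let T_v denote the subtree of all vertices u with a directed path from u to v (including v). A sequence s in [n]^n is a parking function on T (all n drivers park, where driver i starts at s_i and parks at the first unoccupied vertex on the directed path from s_i to the root) if and only if for every vertex v, |T_v| ≤ |{i : s_i ∈ T_v}|. -/
/-! Rooted trees on vertex set `Fin n`, edges oriented towards the root: encoded by
the root and the parent function (`parent v` is the endpoint of the unique outgoing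
edge of a non-root vertex `v`; the root is a fixed point). Tree-ness is the condition
that every vertex reaches the root by iterating `parent` (fewer than `n` steps
always suffice). -/

/-- `(root, parent)` encodes a rooted tree on `Fin n` with edges oriented toward the
root. -/
def IsRootedTree {n : ℕ} (root : Fin n) (parent : Fin n → Fin n) : Prop :=
  parent root = root ∧ ∀ v, ∃ k ∈ Finset.range n, parent^[k] v = root

/-- `T_v`: the set of vertices `u` with a directed path from `u` to `v`
(including `v` itself). -/
def subtree {n : ℕ} (parent : Fin n → Fin n) (v : Fin n) : Finset (Fin n) :=
  Finset.univ.filter fun u => ∃ k ∈ Finset.range n, parent^[k] u = v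

/-- The directed path from `v` towards the root: `v, parent v, parent² v, …`. -/
def pathToRoot {n : ℕ} (parent : Fin n → Fin n) (v : Fin n) : List (Fin n) :=
  (List.range n).map fun k => parent^[k] v

/-- The spot where a driver preferring `v` parks, given the set `occ` of occupied
vertices: the first unoccupied vertex on the path from `v` to the root (`none` if
there is no such vertex, i.e. the driver leaves without parking). -/
def parkSpot {n : ℕ} (parent : Fin n → Fin n) (occ : Finset (Fin n)) (v : Fin n) :
    Option (Fin n) :=
  (pathToRoot parent v).find? fun u => decide (u ∉ occ)

/-- The effect of one driver (preferring `v`) parking on the occupied set. -/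
def treeStep {n : ℕ} (parent : Fin n → Fin n) (occ : Finset (Fin n)) (v : Fin n) :
    Finset (Fin n) :=
  match parkSpot parent occ v with
  | some u => insert u occ
  | none => occ

/-- The set of occupied vertices after the first `m` drivers (with preference
sequence `s`) have attempted to park, in order. -/
def occAfter {n : ℕ} (parent : Fin n → Fin n) (s : Fin n → Fin n) (m : ℕ) :
    Finset (Fin n) :=
  ((List.ofFn s).take m).foldl (treeStep parent) ∅

/-- `s` is a parking function on the rooted tree `(root, parent)`: all `n` drivers
successfully park. -/
def IsTreePF {n : ℕ} (parent : Fin n → Fin n) (s : Fin n → Fin n) : Prop :=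
  occAfter parent s n = Finset.univ

/-- `s` is a prime parking function on `(root, parent)`: it is a parking function and
for every non-root vertex `v`, `|T_v| < |{i : s_i ∈ T_v}|`. -/
def IsPrimeTreePF {n : ℕ} (root : Fin n) (parent : Fin n → Fin n)
    (s : Fin n → Fin n) : Prop :=
  IsTreePF parent s ∧ ∀ v, v ≠ root →
    (subtree parent v).card < (Finset.univ.filter fun i => s i ∈ subtree parent v).card

/-- The edge `(u, parent u)` (for non-root `u`) is *used* by `s`: some driver `i`,
after failing to park at her preferred spot `s i`, crosses it, i.e. every vertex on
the path from `s i` up to and including `u` is occupied when she drives. -/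
def UsedEdge {n : ℕ} (root : Fin n) (parent : Fin n → Fin n) (s : Fin n → Fin n)
    (u : Fin n) : Prop :=
  u ≠ root ∧ ∃ i : Fin n, ∃ k, parent^[k] (s i) = u ∧
    ∀ j ≤ k, parent^[j] (s i) ∈ occAfter parent s i

/-! If every driver parks, each vertex `w` of `T_v` is taken by a driver whose preference lies
in `T_w ⊆ T_v`, and different vertices are taken by different drivers. Conversely, if a vertex
`u` stays empty, then every driver preferring a vertex of `T_u` still finds `u` free when she
arrives, so she parks in `T_u`, and not at `u` itself; as drivers park at distinct vertices,
fewer than `|T_u|` drivers prefer `T_u`. -/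

section

variable {n : ℕ} {parent : Fin n → Fin n}

lemma mem_subtree_iff {u v : Fin n} : u ∈ subtree parent v ↔ ∃ k < n, parent^[k] u = v := by
  simp [subtree]

lemma self_mem_subtree (v : Fin n) : v ∈ subtree parent v :=
  mem_subtree_iff.mpr ⟨0, v.pos, rfl⟩

/-- A walk that reaches the root stays there, and it does so within `n` steps. -/
lemma IsRootedTree.exists_iterate_lt {root : Fin n} (hT : IsRootedTree root parent)
    {u v : Fin n} {m : ℕ} (h : parent^[m] u = v) : ∃ k < n, parent^[k] u = v := by
  obtain ⟨hroot, hreach⟩ := hT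
  obtain ⟨k, hk, hku⟩ := hreach u
  rw [Finset.mem_range] at hk
  by_cases hmk : m ≤ k
  · exact ⟨m, by omega, h⟩
  · refine ⟨k, hk, ?_⟩
    rw [← h, show m = (m - k) + k by omega, Function.iterate_add_apply, hku,
      Function.iterate_fixed hroot]

lemma IsRootedTree.subtree_subset {root : Fin n} (hT : IsRootedTree root parent)
    {v w : Fin n} (hw : w ∈ subtree parent v) : subtree parent w ⊆ subtree parent v := by
  intro a ha
  obtain ⟨k, -, hk⟩ := mem_subtree_iff.mp ha
  obtain ⟨l, -, hl⟩ := mem_subtree_iff.mp hw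
  exact mem_subtree_iff.mpr <|
    hT.exists_iterate_lt (by rw [Function.iterate_add_apply, hk, hl] : parent^[l + k] a = v)

lemma parkSpot_eq_map_find (occ : Finset (Fin n)) (v : Fin n) :
    parkSpot parent occ v =
      ((List.range n).find? fun k => decide (parent^[k] v ∉ occ)).map (parent^[·] v) := by
  rw [parkSpot, pathToRoot, List.find?_map]
  rfl

lemma parkSpot_eq_some {occ : Finset (Fin n)} {v w : Fin n}
    (h : parkSpot parent occ v = some w) : w ∉ occ ∧ v ∈ subtree parent w := by
  rw [parkSpot_eq_map_find, Option.map_eq_some_iff] at h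
  obtain ⟨k, hk, rfl⟩ := h
  obtain ⟨hfree, hkn, -⟩ := List.find?_range_eq_some.mp hk
  exact ⟨of_decide_eq_true hfree, mem_subtree_iff.mpr ⟨k, List.mem_range.mp hkn, rfl⟩⟩

/-- The first free vertex on the path from `v` comes no later than the free vertex `u`. -/
lemma exists_parkSpot_mem_subtree {occ : Finset (Fin n)} {u v : Fin n} (hu : u ∉ occ)
    (hv : v ∈ subtree parent u) :
    ∃ w, parkSpot parent occ v = some w ∧ w ∈ subtree parent u := by
  obtain ⟨k, hk, hku⟩ := mem_subtree_iff.mp hv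
  rw [parkSpot_eq_map_find]
  rcases hfind : (List.range n).find? (fun k => decide (parent^[k] v ∉ occ)) with _ | j
  · have := List.find?_range_eq_none.mp hfind k hk
    simp [hku, hu] at this
  · obtain ⟨-, hjn, hmin⟩ := List.find?_range_eq_some.mp hfind
    have hjk : j ≤ k := by
      by_contra! hkj
      have := hmin k hkj
      simp [hku, hu] at this
    refine ⟨parent^[j] v, rfl, mem_subtree_iff.mpr ⟨k - j, by omega, ?_⟩⟩
    rw [← Function.iterate_add_apply, Nat.sub_add_cancel hjk, hku]

lemma mem_treeStep {occ : Finset (Fin n)} {v w : Fin n} :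
    w ∈ treeStep parent occ v ↔ w ∈ occ ∨ parkSpot parent occ v = some w := by
  unfold treeStep
  rcases parkSpot parent occ v with _ | u
  · simp
  · simp [eq_comm, or_comm]

variable {s : Fin n → Fin n}

lemma occAfter_succ {m : ℕ} (hm : m < n) :
    occAfter parent s (m + 1) = treeStep parent (occAfter parent s m) (s ⟨m, hm⟩) := by
  simp [occAfter, List.take_add_one, List.foldl_append, hm]

lemma occAfter_of_le {m : ℕ} (hm : n ≤ m) : occAfter parent s m = occAfter parent s n := by
  unfold occAfter
  rw [List.take_of_length_le (by simpa using hm), List.take_of_length_le (by simp)]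

def driverSpot (parent : Fin n → Fin n) (s : Fin n → Fin n) (i : Fin n) : Option (Fin n) :=
  parkSpot parent (occAfter parent s i) (s i)

lemma mem_occAfter_iff {w : Fin n} {m : ℕ} :
    w ∈ occAfter parent s m ↔
      ∃ i : Fin n, (i : ℕ) < m ∧ driverSpot parent s i = some w := by
  induction m with
  | zero => simp [occAfter]
  | succ m ih =>
    by_cases hm : m < n
    · rw [occAfter_succ hm, mem_treeStep, ih]
      constructor
      · rintro (⟨i, hi, hw⟩ | hw)
        · exact ⟨i, by omega, hw⟩
        · exact ⟨⟨m, hm⟩, by simp, hw⟩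
      · rintro ⟨i, hi, hw⟩
        rcases Nat.lt_succ_iff_lt_or_eq.mp hi with hi | hi
        · exact Or.inl ⟨i, hi, hw⟩
        · obtain rfl : i = ⟨m, hm⟩ := Fin.ext hi
          exact Or.inr hw
    · rw [occAfter_of_le (by omega : n ≤ m + 1), ← occAfter_of_le (by omega : n ≤ m), ih]
      exact exists_congr fun i => and_congr_left fun _ => by omega

/-- The vertex taken by driver `i` is occupied for every later driver, who therefore parks
elsewhere. -/
lemma eq_of_driverSpot_eq_some {i j : Fin n} {w : Fin n} (hi : driverSpot parent s i = some w)
    (hj : driverSpot parent s j = some w) : i = j := by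
  have not_lt_of_spot_eq : ∀ {i j : Fin n}, driverSpot parent s i = some w →
      driverSpot parent s j = some w → ¬ i < j :=
    fun hi hj hij => (parkSpot_eq_some hj).1 (mem_occAfter_iff.mpr ⟨_, hij, hi⟩)
  exact le_antisymm (le_of_not_gt (not_lt_of_spot_eq hj hi))
    (le_of_not_gt (not_lt_of_spot_eq hi hj))

lemma IsRootedTree.card_subtree_le_of_isTreePF {root : Fin n} (hT : IsRootedTree root parent)
    (hpf : IsTreePF parent s) (v : Fin n) :
    (subtree parent v).card ≤ (Finset.univ.filter fun i => s i ∈ subtree parent v).card := by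
  have hparked : ∀ w : Fin n, ∃ i : Fin n, driverSpot parent s i = some w := fun w => by
    have hw : w ∈ occAfter parent s n := by rw [hpf]; exact Finset.mem_univ w
    obtain ⟨i, -, hi⟩ := mem_occAfter_iff.mp hw
    exact ⟨i, hi⟩
  choose driver hdriver using hparked
  refine Finset.card_le_card_of_injOn driver (fun w hw => ?_) (fun w _ w' _ h => ?_)
  · have hpref := (parkSpot_eq_some (hdriver w)).2
    simpa using hT.subtree_subset hw hpref
  · exact Option.some_injective _ (by rw [← hdriver w, ← hdriver w', h])

lemma card_filter_lt_card_subtree_of_notMem {u : Fin n} (hu : u ∉ occAfter parent s n) :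
    (Finset.univ.filter fun i => s i ∈ subtree parent u).card < (subtree parent u).card := by
  have hfree : ∀ i : Fin n, u ∉ occAfter parent s i := fun i hi => by
    obtain ⟨j, hj, hju⟩ := mem_occAfter_iff.mp hi
    exact hu (mem_occAfter_iff.mpr ⟨j, by omega, hju⟩)
  have hspot : ∀ i : Fin n, s i ∈ subtree parent u →
      ∃ w, driverSpot parent s i = some w ∧ w ∈ subtree parent u :=
    fun i hi => exists_parkSpot_mem_subtree (hfree i) hi
  choose! spot hspot_eq hspot_mem using hspot
  calc (Finset.univ.filter fun i => s i ∈ subtree parent u).card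
      ≤ (subtree parent u \ {u}).card := by
        refine Finset.card_le_card_of_injOn spot (fun i hi => ?_) (fun i hi j hj h => ?_)
        · replace hi := (Finset.mem_filter.mp hi).2
          refine Finset.mem_sdiff.mpr ⟨hspot_mem i hi, fun hiu => hu ?_⟩
          rw [Finset.mem_singleton] at hiu
          exact mem_occAfter_iff.mpr ⟨i, i.2, hiu ▸ hspot_eq i hi⟩
        · exact eq_of_driverSpot_eq_some (hspot_eq i (Finset.mem_filter.mp hi).2)
            (h ▸ hspot_eq j (Finset.mem_filter.mp hj).2)
    _ < (subtree parent u).card :=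
        Finset.card_lt_card (Finset.sdiff_ssubset (by simpa using self_mem_subtree u) (by simp))

end

/-- `s` is a parking function on the rooted tree `(root, parent)` if
and only if for every vertex `v`, `|T_v| ≤ |{i : s_i ∈ T_v}|`. -/
theorem isTreePF_iff_count {n : ℕ} (root : Fin n) (parent : Fin n → Fin n)
    (hT : IsRootedTree root parent) (s : Fin n → Fin n) :
    IsTreePF parent s ↔ ∀ v : Fin n,
      (subtree parent v).card ≤ (Finset.univ.filter fun i => s i ∈ subtree parent v).card := by
  refine ⟨hT.card_subtree_le_of_isTreePF, fun hcount => ?_⟩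
  by_contra hpf
  obtain ⟨u, hu⟩ : ∃ u, u ∉ occAfter parent s n := by
    simpa [IsTreePF, Finset.eq_univ_iff_forall] using hpf
  exact (card_filter_lt_card_subtree_of_notMem hu).not_ge (hcount u)
end

section
/- Let (T,s) be a parking function on a rooted tree T. An edge e = (u,v) (from u to its parent v) is used by s — i.e., some driver crosses e after failing to park at her preferred spot — if and only if |T_u| < |{i : s_i ∈ T_u}|. Consequently, the set of used edges is invariant under permutations of s. -/
/-! In a parking function every driver parks, so `i ↦ spot i`, the vertex where driver `i`
parks, is a bijection. Drivers only move towards the root, so a driver parking in `T_u` prefers a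
vertex of `T_u`; hence `|T_u| ≤ |{i : s_i ∈ T_u}|`, with strict inequality exactly when some driver
preferring a vertex of `T_u` parks outside it, i.e. crosses the edge out of `u`. Permuting `s`
preserves the count, and preserves being a parking function because the occupied set after two
drivers does not depend on their order. -/

namespace TreePF

def Reach {α : Type*} (f : α → α) (a b : α) : Prop := ∃ k, f^[k] a = b

section Reach

variable {α : Type*} {f : α → α} {a b c : α}

lemma reach_iterate (f : α → α) (a : α) (k : ℕ) : Reach f a (f^[k] a) := ⟨k, rfl⟩

lemma Reach.trans (hab : Reach f a b) (hbc : Reach f b c) : Reach f a c := by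
  obtain ⟨k, rfl⟩ := hab
  obtain ⟨m, rfl⟩ := hbc
  exact ⟨m + k, Function.iterate_add_apply f m k a⟩

end Reach

lemma eq_self_of_le_add_one {f : ℕ → ℕ} {N m : ℕ} (h0 : f 0 = 0)
    (hstep : ∀ k < N, f (k + 1) ≤ f k + 1) (hN : f N = N) (hm : m ≤ N) : f m = m := by
  have hle : ∀ k ≤ N, f k ≤ k := by
    intro k hk
    induction k with
    | zero => rw [h0]
    | succ k ih => exact (hstep k hk).trans (Nat.succ_le_succ (ih (by omega)))
  have hgrow : ∀ k, m + k ≤ N → f (m + k) ≤ f m + k := by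
    intro k hk
    induction k with
    | zero => rfl
    | succ k ih => exact (hstep (m + k) (by omega)).trans (Nat.succ_le_succ (ih (by omega)))
  have := hgrow (N - m) (by omega)
  rw [Nat.add_sub_cancel' hm, hN] at this
  have := hle m hm
  omega

variable {n : ℕ} {root : Fin n} {parent : Fin n → Fin n}

lemma iterate_eq_root (hT : IsRootedTree root parent) (v : Fin n) {m : ℕ}
    (hm : n ≤ m) : parent^[m] v = root := by
  obtain ⟨k, hk, hkv⟩ := hT.2 v
  rw [Finset.mem_range] at hk
  rw [← Nat.sub_add_cancel (hk.le.trans hm), Function.iterate_add_apply, hkv,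
    Function.iterate_fixed hT.1]

lemma reach_bound (hT : IsRootedTree root parent) {a b : Fin n}
    (h : Reach parent a b) : ∃ k < n, parent^[k] a = b := by
  obtain ⟨k, rfl⟩ := h
  by_cases hk : k < n
  · exact ⟨k, hk, rfl⟩
  · obtain ⟨m, hm, hma⟩ := hT.2 a
    exact ⟨m, Finset.mem_range.1 hm, by rw [hma, iterate_eq_root hT a (not_lt.1 hk)]⟩

lemma reach_antisymm (hT : IsRootedTree root parent) {a b : Fin n}
    (hab : Reach parent a b) (hba : Reach parent b a) : a = b := by
  obtain ⟨k, rfl⟩ := hab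
  obtain ⟨m, hm⟩ := hba
  rcases Nat.eq_zero_or_pos k with rfl | hk
  · rfl
  -- `a` is periodic with a positive period, and every orbit ends at the fixed point `root`.
  have hper : parent^[(m + k) * n] a = a :=
    Function.iterate_mul parent _ _ ▸ Function.iterate_fixed (by
      rwa [Function.iterate_add_apply]) n
  have ha : a = root := hper ▸ iterate_eq_root hT a (Nat.le_mul_of_pos_left n (by omega))
  rw [ha, Function.iterate_fixed hT.1]

lemma mem_subtree_iff (hT : IsRootedTree root parent) {a b : Fin n} :
    a ∈ subtree parent b ↔ Reach parent a b := by
  simp only [subtree, Finset.mem_filter, Finset.mem_univ, true_and, Finset.mem_range]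
  exact ⟨fun ⟨k, _, hk⟩ => ⟨k, hk⟩, reach_bound hT⟩

variable {occ occ' : Finset (Fin n)} {u v w : Fin n}

lemma parkSpot_eq_none_iff (hT : IsRootedTree root parent) :
    parkSpot parent occ v = none ↔ ∀ z, Reach parent v z → z ∈ occ := by
  simp only [parkSpot, List.find?_eq_none, pathToRoot, List.mem_map, List.mem_range,
    decide_eq_true_eq, not_not, forall_exists_index, and_imp]
  exact ⟨fun h z hz => by obtain ⟨k, hk, rfl⟩ := reach_bound hT hz; exact h _ k hk rfl,
    fun h _ k _ hk => h _ ⟨k, hk⟩⟩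

lemma parkSpot_eq_some_iff (hT : IsRootedTree root parent) :
    parkSpot parent occ v = some w ↔
      Reach parent v w ∧ w ∉ occ ∧ ∀ z, Reach parent v z → z ∉ occ → Reach parent w z := by
  simp only [parkSpot, List.find?_eq_some_iff_getElem, pathToRoot, List.length_map,
    List.length_range, List.getElem_map, List.getElem_range, decide_eq_true_eq,
    Bool.not_eq_true', decide_eq_false_iff_not, not_not]
  constructor
  · rintro ⟨hw, k, -, rfl, hbefore⟩
    refine ⟨reach_iterate parent v k, hw, fun z hz hzocc => ?_⟩
    obtain ⟨m, hm, rfl⟩ := reach_bound hT hz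
    have hkm : k ≤ m := not_lt.1 fun hmk => hzocc (hbefore m hmk)
    exact ⟨m - k, by rw [← Function.iterate_add_apply, Nat.sub_add_cancel hkm]⟩
  · classical
    rintro ⟨hvw, hw, hfirst⟩
    obtain ⟨k, hk, hkw⟩ := reach_bound hT hvw
    refine ⟨hw, Nat.find hvw, (Nat.find_le hkw).trans_lt hk, Nat.find_spec hvw,
      fun j hj => by_contra fun hj_occ => Nat.find_min hvw hj ?_⟩
    refine reach_antisymm hT ⟨Nat.find hvw - j, ?_⟩ (hfirst _ (reach_iterate parent v j) hj_occ)
    rw [← Function.iterate_add_apply, Nat.sub_add_cancel hj.le, Nat.find_spec hvw]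

lemma parkSpot_congr (hT : IsRootedTree root parent) {a b : Fin n}
    (h : ∀ z, Reach parent a z ∧ z ∉ occ ↔ Reach parent b z ∧ z ∉ occ') :
    parkSpot parent occ a = parkSpot parent occ' b := by
  cases hb : parkSpot parent occ' b with
  | none =>
    rw [parkSpot_eq_none_iff hT] at hb ⊢
    intro z hz
    by_contra hzocc
    obtain ⟨hbz, hzocc'⟩ := (h z).1 ⟨hz, hzocc⟩
    exact hzocc' (hb z hbz)
  | some w =>
    rw [parkSpot_eq_some_iff hT] at hb ⊢
    obtain ⟨hbw, hw, hfirst⟩ := hb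
    obtain ⟨haw, hw'⟩ := (h w).2 ⟨hbw, hw⟩
    refine ⟨haw, hw', fun z hz hzocc => ?_⟩
    obtain ⟨hbz, hzocc'⟩ := (h z).1 ⟨hz, hzocc⟩
    exact hfirst z hbz hzocc'

lemma parkSpot_insert_self (hT : IsRootedTree root parent) (h : parkSpot parent occ v = some w) :
    parkSpot parent (insert w occ) v = parkSpot parent (insert w occ) w := by
  obtain ⟨hvw, -, hfirst⟩ := (parkSpot_eq_some_iff hT).1 h
  refine parkSpot_congr hT fun z => and_congr_left fun hz => ⟨fun hvz => ?_, hvw.trans⟩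
  exact hfirst z hvz (fun hzocc => hz (Finset.mem_insert_of_mem hzocc))

lemma parkSpot_insert_of_ne (hT : IsRootedTree root parent) {x : Fin n}
    (h : parkSpot parent occ v = some w) (hxw : x ≠ w) :
    parkSpot parent (insert x occ) v = some w := by
  rw [parkSpot_eq_some_iff hT] at h ⊢
  obtain ⟨hvw, hw, hfirst⟩ := h
  exact ⟨hvw, by simp [hw, hxw.symm], fun z hz hzocc => hfirst z hz
    fun hzocc' => hzocc (Finset.mem_insert_of_mem hzocc')⟩

lemma parkSpot_insert_of_eq_none (hT : IsRootedTree root parent) (x : Fin n)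
    (h : parkSpot parent occ v = none) : parkSpot parent (insert x occ) v = none := by
  rw [parkSpot_eq_none_iff hT] at h ⊢
  exact fun z hz => Finset.mem_insert_of_mem (h z hz)

lemma treeStep_right_comm (hT : IsRootedTree root parent) (occ : Finset (Fin n)) (a b : Fin n) :
    treeStep parent (treeStep parent occ a) b = treeStep parent (treeStep parent occ b) a := by
  rcases ha : parkSpot parent occ a with _ | x <;> rcases hb : parkSpot parent occ b with _ | y
  · simp only [treeStep, ha, hb]
  · simp only [treeStep, ha, hb, parkSpot_insert_of_eq_none hT y ha]
  · simp only [treeStep, ha, hb, parkSpot_insert_of_eq_none hT x hb]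
  · by_cases hxy : x = y
    · subst hxy
      simp only [treeStep, ha, hb, parkSpot_insert_self hT ha, parkSpot_insert_self hT hb]
    · simp only [treeStep, ha, hb, parkSpot_insert_of_ne hT ha (Ne.symm hxy),
        parkSpot_insert_of_ne hT hb hxy, Finset.insert_comm]

variable {s : Fin n → Fin n}

lemma occAfter_succ (i : Fin n) :
    occAfter parent s (i + 1) = treeStep parent (occAfter parent s i) (s i) := by
  rw [occAfter, List.take_add_one, List.getElem?_eq_getElem (by simp), List.foldl_append]
  simp [occAfter]

lemma card_treeStep_le (occ : Finset (Fin n)) (v : Fin n) :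
    (treeStep parent occ v).card ≤ occ.card + 1 := by
  unfold treeStep
  split
  · exact Finset.card_insert_le _ _
  · exact Nat.le_succ _

lemma subset_treeStep (occ : Finset (Fin n)) (v : Fin n) : occ ⊆ treeStep parent occ v := by
  unfold treeStep
  split
  · exact Finset.subset_insert _ _
  · exact subset_rfl

lemma card_occAfter (hs : IsTreePF parent s) {m : ℕ} (hm : m ≤ n) :
    (occAfter parent s m).card = m :=
  eq_self_of_le_add_one (f := fun m => (occAfter parent s m).card) rfl
    (fun k hk => occAfter_succ (s := s) ⟨k, hk⟩ ▸ card_treeStep_le _ _)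
    (by rw [hs, Finset.card_univ, Fintype.card_fin]) hm

lemma occAfter_mono {i j : ℕ} (hij : i ≤ j) (hj : j ≤ n) :
    occAfter parent s i ⊆ occAfter parent s j := by
  induction j, hij using Nat.le_induction with
  | base => exact subset_rfl
  | succ j _ ih =>
    exact (ih (by omega)).trans (occAfter_succ (s := s) ⟨j, hj⟩ ▸ subset_treeStep _ _)

/-- Junk value `s i` if driver `i` does not park. -/
def spot (parent s : Fin n → Fin n) (i : Fin n) : Fin n :=
  (parkSpot parent (occAfter parent s i) (s i)).getD (s i)

lemma parkSpot_occAfter (hs : IsTreePF parent s) (i : Fin n) :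
    parkSpot parent (occAfter parent s i) (s i) = some (spot parent s i) := by
  refine (Option.getD_of_ne_none (fun hnone => ?_) (s i)).symm
  have hcard := card_occAfter hs (Nat.succ_le_of_lt i.isLt)
  rw [occAfter_succ, treeStep, hnone, card_occAfter hs i.isLt.le] at hcard
  omega

lemma occAfter_succ_eq_insert_spot (hs : IsTreePF parent s) (i : Fin n) :
    occAfter parent s (i + 1) = insert (spot parent s i) (occAfter parent s i) := by
  rw [occAfter_succ, treeStep, parkSpot_occAfter hs]

lemma spot_injective (hT : IsRootedTree root parent) (hs : IsTreePF parent s) :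
    Function.Injective (spot parent s) := by
  have key : ∀ i j : Fin n, i < j → spot parent s i ≠ spot parent s j := by
    intro i j hij heq
    have hmem : spot parent s i ∈ occAfter parent s j :=
      occAfter_mono (Fin.lt_def.1 hij) j.isLt.le
        (occAfter_succ_eq_insert_spot hs i ▸ Finset.mem_insert_self _ _)
    exact ((parkSpot_eq_some_iff hT).1 (parkSpot_occAfter hs j)).2.1 (heq ▸ hmem)
  intro i j heq
  rcases lt_trichotomy i j with hij | rfl | hji
  · exact absurd heq (key i j hij)
  · rfl
  · exact absurd heq.symm (key j i hji)

lemma forall_iterate_mem_iff_not_reach (hT : IsRootedTree root parent) {k : ℕ}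
    (h : parkSpot parent occ v = some w) (hk : parent^[k] v = u) :
    (∀ j ≤ k, parent^[j] v ∈ occ) ↔ ¬ Reach parent w u := by
  obtain ⟨⟨m, rfl⟩, hw, hfirst⟩ := (parkSpot_eq_some_iff hT).1 h
  constructor
  · rintro hocc ⟨l, hl⟩
    rcases le_or_gt m k with hmk | hkm
    · exact hw (hocc m hmk)
    · have hwu : parent^[m] v = u := reach_antisymm hT ⟨l, hl⟩
        ⟨m - k, by rw [← hk, ← Function.iterate_add_apply, Nat.sub_add_cancel hkm.le]⟩
      exact hw (hwu ▸ hk ▸ hocc k le_rfl)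
  · intro hwu j hj
    by_contra hj_occ
    refine hwu ((hfirst _ (reach_iterate parent v j) hj_occ).trans ⟨k - j, ?_⟩)
    rw [← Function.iterate_add_apply, Nat.sub_add_cancel hj, hk]

lemma usedEdge_iff_exists_spot_notMem (hT : IsRootedTree root parent) (hs : IsTreePF parent s)
    (hu : u ≠ root) :
    UsedEdge root parent s u ↔
      ∃ i, s i ∈ subtree parent u ∧ spot parent s i ∉ subtree parent u := by
  simp only [UsedEdge, hu, ne_eq, not_false_eq_true, true_and, mem_subtree_iff hT]
  refine exists_congr fun i =>
    ⟨fun ⟨k, hk, hocc⟩ => ⟨⟨k, hk⟩, ?_⟩, fun ⟨⟨k, hk⟩, hnot⟩ => ⟨k, hk, ?_⟩⟩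
  · exact (forall_iterate_mem_iff_not_reach hT (parkSpot_occAfter hs i) hk).1 hocc
  · exact (forall_iterate_mem_iff_not_reach hT (parkSpot_occAfter hs i) hk).2 hnot

lemma card_lt_card_filter_iff {α β : Type*} [Fintype α] [DecidableEq β] {f g : α → β}
    (hf : f.Bijective) {t : Finset β} (hfg : ∀ a, f a ∈ t → g a ∈ t) :
    t.card < (Finset.univ.filter fun a => g a ∈ t).card ↔ ∃ a, g a ∈ t ∧ f a ∉ t := by
  have hsub : (Finset.univ.filter fun a => f a ∈ t) ⊆ Finset.univ.filter fun a => g a ∈ t := by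
    simpa only [Finset.subset_iff, Finset.mem_filter, Finset.mem_univ, true_and] using hfg
  rw [← Finset.card_bijective (s := Finset.univ.filter fun a => f a ∈ t) f hf (by simp)]
  constructor
  · intro hlt
    obtain ⟨a, ha, hna⟩ := Finset.exists_mem_notMem_of_card_lt_card hlt
    simp only [Finset.mem_filter, Finset.mem_univ, true_and] at ha hna
    exact ⟨a, ha, hna⟩
  · rintro ⟨a, ha, hna⟩
    exact Finset.card_lt_card ((Finset.ssubset_iff_of_subset hsub).2 ⟨a, by simpa, by simpa⟩)

lemma usedEdge_iff_card_lt (hT : IsRootedTree root parent) (hs : IsTreePF parent s)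
    (hu : u ≠ root) :
    UsedEdge root parent s u ↔
      (subtree parent u).card < (Finset.univ.filter fun i => s i ∈ subtree parent u).card := by
  rw [usedEdge_iff_exists_spot_notMem hT hs hu,
    card_lt_card_filter_iff (Finite.injective_iff_bijective.1 (spot_injective hT hs))]
  intro i hi
  rw [mem_subtree_iff hT] at hi ⊢
  exact (parkSpot_eq_some_iff hT).1 (parkSpot_occAfter hs i) |>.1.trans hi

lemma isTreePF_comp_perm (hT : IsRootedTree root parent) (hs : IsTreePF parent s)
    (σ : Equiv.Perm (Fin n)) : IsTreePF parent fun i => s (σ i) := by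
  have hfull : ∀ t : Fin n → Fin n,
      occAfter parent t n = (List.ofFn t).foldl (treeStep parent) ∅ := fun t => by
    rw [occAfter, List.take_of_length_le (by simp)]
  rw [IsTreePF, hfull, ← hs, hfull]
  exact (σ.ofFn_comp_perm s).foldl_eq' (fun x _ y _ occ => treeStep_right_comm hT occ x y) ∅

end TreePF

/-- For a parking function `(T, s)`, the edge `(u, parent u)` out of
a non-root vertex `u` is used by `s` iff `|T_u| < |{i : s_i ∈ T_u}|`; consequently,
the set of used edges is invariant under permutations of `s`. -/
theorem usedEdge_iff_count {n : ℕ} (root : Fin n) (parent : Fin n → Fin n)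
    (hT : IsRootedTree root parent) (s : Fin n → Fin n) (hs : IsTreePF parent s) :
    (∀ u : Fin n, u ≠ root →
      (UsedEdge root parent s u ↔
        (subtree parent u).card <
          (Finset.univ.filter fun i => s i ∈ subtree parent u).card)) ∧
    ∀ (σ : Equiv.Perm (Fin n)) (u : Fin n),
      UsedEdge root parent (fun i => s (σ i)) u ↔ UsedEdge root parent s u := by
  refine ⟨fun u hu => TreePF.usedEdge_iff_card_lt hT hs hu, fun σ u => ?_⟩
  by_cases hu : u = root
  · simp [UsedEdge, hu]
  have hcount : (Finset.univ.filter fun i => s (σ i) ∈ subtree parent u).card =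
      (Finset.univ.filter fun i => s i ∈ subtree parent u).card :=
    Finset.card_equiv σ (by simp)
  rw [TreePF.usedEdge_iff_card_lt hT (TreePF.isTreePF_comp_perm hT hs σ) hu,
    TreePF.usedEdge_iff_card_lt hT hs hu, hcount]
end

section
/- The formal power series P(x) = 2xC(x) + log(1 − xC(x)), where C(x) is the Catalan generating function, satisfies P'(x) = C(x); consequently P(x) = Σ_{n≥1} (C_{n−1}/n) x^n = Σ_{n≥1} (2n−2)! x^n/(n!)^2. -/
open PowerSeries

/-- The ordinary generating function of the Catalan numbers, `C(x) = Σ_{n≥0} Cₙ xⁿ`. -/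
noncomputable def catalanSeriesQ : PowerSeries ℚ := PowerSeries.mk fun n => (catalan n : ℚ)

/-- The formal power series `log(1 − y) = −Σ_{k≥1} yᵏ/k`, for `y` with zero constant
term: the `n`-th coefficient only receives contributions from `yᵏ` with `1 ≤ k ≤ n`. -/
noncomputable def logOneSub (y : PowerSeries ℚ) : PowerSeries ℚ :=
  PowerSeries.mk fun n =>
    PowerSeries.coeff n (-∑ k ∈ Finset.Icc 1 n, ((k : ℚ)⁻¹ • y ^ k))

/-- `P(x) = 2xC(x) + log(1 − xC(x))`. -/
noncomputable def Pseries : PowerSeries ℚ :=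
  2 * X * catalanSeriesQ + logOneSub (X * catalanSeriesQ)

/-! With `y = x C(x)`, the Catalan equation `C = 1 + x C²` reads `y - y² = x`; differentiating,
`(1 - 2y) y' = 1`, and also `(1 - y) C = 1`. Since `(1 - y) · log(1 - y)' = -y'`, this gives
`(1 - y) P' = 2(1 - y) y' - y' = (1 - 2y) y' = 1 = (1 - y) C`, so `P' = C`. The coefficients
follow from `(n + 1) [xⁿ⁺¹] P = Cₙ` and `(n + 1) Cₙ = (2n)! / (n!)²`. -/

namespace PowerSeries

section CommSemiring

variable {R : Type*} [CommSemiring R]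

theorem eq_zero_of_forall_X_pow_dvd {f : R⟦X⟧} (h : ∀ n, (X : R⟦X⟧) ^ n ∣ f) : f = 0 := by
  ext n
  exact X_pow_dvd_iff.mp (h (n + 1)) n n.lt_succ_self

theorem X_pow_dvd_pow_of_constantCoeff_eq_zero {y : R⟦X⟧} (hy : constantCoeff y = 0)
    (k : ℕ) : (X : R⟦X⟧) ^ k ∣ y ^ k :=
  pow_dvd_pow_of_dvd (X_dvd_iff.mpr hy) k

theorem X_pow_dvd_derivative {f : R⟦X⟧} {n : ℕ} (h : (X : R⟦X⟧) ^ (n + 1) ∣ f) :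
    (X : R⟦X⟧) ^ n ∣ d⁄dX R f := by
  rw [X_pow_dvd_iff] at h ⊢
  intro m hm
  rw [coeff_derivative, h (m + 1) (by omega), zero_mul]

end CommSemiring

theorem one_sub_two_mul_mul_derivative_of_sub_sq_eq_X {R : Type*} [CommRing R] {y : R⟦X⟧}
    (h : y - y ^ 2 = X) :
    (1 - 2 * y) * d⁄dX R y = 1 := by
  have h' := congrArg (d⁄dX R) h
  rw [map_sub, Derivation.leibniz_pow, derivative_X, pow_one, smul_eq_mul, nsmul_eq_mul] at h'
  linear_combination h'

theorem derivative_sum_inv_smul_pow {K : Type*} [Field K] [CharZero K] (y : K⟦X⟧) (N : ℕ) :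
    d⁄dX K (∑ k ∈ Finset.Icc 1 N, (k : K)⁻¹ • y ^ k) =
      (∑ j ∈ Finset.range N, y ^ j) * d⁄dX K y := by
  rw [map_sum, Finset.sum_mul, ← Finset.Ico_add_one_right_eq_Icc, Finset.sum_Ico_eq_sum_range,
    Nat.add_sub_cancel]
  refine Finset.sum_congr rfl fun j _ => ?_
  rw [Derivation.map_smul, Derivation.leibniz_pow, add_tsub_cancel_left,
    ← Nat.cast_smul_eq_nsmul K, smul_smul, inv_mul_cancel₀ (Nat.cast_ne_zero.mpr (by omega)),
    one_smul, smul_eq_mul]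

end PowerSeries

theorem X_pow_dvd_logOneSub_add_sum {y : ℚ⟦X⟧} (hy : constantCoeff y = 0) (N : ℕ) :
    (X : ℚ⟦X⟧) ^ (N + 1) ∣ logOneSub y + ∑ k ∈ Finset.Icc 1 N, (k : ℚ)⁻¹ • y ^ k := by
  refine X_pow_dvd_iff.mpr fun m hm => ?_
  rw [map_add, logOneSub, coeff_mk, map_neg, neg_add_eq_zero, map_sum, map_sum]
  refine Finset.sum_subset (Finset.Icc_subset_Icc_right (by omega)) fun k hk hk' => ?_
  simp only [Finset.mem_Icc] at hk hk'
  rw [LinearMap.map_smul,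
    X_pow_dvd_iff.mp (X_pow_dvd_pow_of_constantCoeff_eq_zero hy k) m (by omega), smul_zero]

/-- `logOneSub y` agrees with the partial sum `-S` up to order `N`, and `(1 - y) S' = (1 - yᴺ) y'`,
so `(1 - y) · (logOneSub y)' + y'` is divisible by every power of `X`. -/
theorem one_sub_mul_derivative_logOneSub {y : ℚ⟦X⟧} (hy : constantCoeff y = 0) :
    (1 - y) * d⁄dX ℚ (logOneSub y) = -d⁄dX ℚ y := by
  rw [← sub_eq_zero, sub_neg_eq_add]
  refine eq_zero_of_forall_X_pow_dvd fun N => ?_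
  set S := ∑ k ∈ Finset.Icc 1 N, (k : ℚ)⁻¹ • y ^ k
  have key : (1 - y) * d⁄dX ℚ (logOneSub y) + d⁄dX ℚ y =
      (1 - y) * d⁄dX ℚ (logOneSub y + S) + y ^ N * d⁄dX ℚ y := by
    rw [map_add, derivative_sum_inv_smul_pow, mul_add, ← mul_assoc, mul_neg_geom_sum]
    ring
  rw [key]
  exact dvd_add (dvd_mul_of_dvd_right (X_pow_dvd_derivative (X_pow_dvd_logOneSub_add_sum hy N)) _)
    (dvd_mul_of_dvd_left (X_pow_dvd_pow_of_constantCoeff_eq_zero hy N) _)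

theorem catalanSeriesQ_eq_one_add_X_mul_sq : catalanSeriesQ = 1 + X * catalanSeriesQ ^ 2 := by
  ext (_ | n)
  · simp [catalanSeriesQ]
  · rw [map_add, coeff_succ_X_mul, sq, coeff_mul]
    simp only [catalanSeriesQ, coeff_mk, coeff_one, Nat.succ_ne_zero, if_false, zero_add,
      catalan_succ', Nat.cast_sum, Nat.cast_mul]

theorem one_sub_X_mul_catalanSeriesQ_mul : (1 - X * catalanSeriesQ) * catalanSeriesQ = 1 := by
  linear_combination catalanSeriesQ_eq_one_add_X_mul_sq

theorem X_mul_catalanSeriesQ_sub_sq : X * catalanSeriesQ - (X * catalanSeriesQ) ^ 2 = X := by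
  linear_combination X * catalanSeriesQ_eq_one_add_X_mul_sq

theorem derivative_Pseries : d⁄dX ℚ Pseries = catalanSeriesQ := by
  have h : (1 - X * catalanSeriesQ) * d⁄dX ℚ Pseries = 1 := by
    rw [Pseries,
      show (2 : ℚ⟦X⟧) * X * catalanSeriesQ = X * catalanSeriesQ + X * catalanSeriesQ by ring,
      map_add, map_add, mul_add, one_sub_mul_derivative_logOneSub (by simp)]
    linear_combination one_sub_two_mul_mul_derivative_of_sub_sq_eq_X X_mul_catalanSeriesQ_sub_sq
  calc d⁄dX ℚ Pseries = (1 - X * catalanSeriesQ) * catalanSeriesQ * d⁄dX ℚ Pseries := by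
        rw [one_sub_X_mul_catalanSeriesQ_mul, one_mul]
    _ = (1 - X * catalanSeriesQ) * d⁄dX ℚ Pseries * catalanSeriesQ := by ring
    _ = catalanSeriesQ := by rw [h, one_mul]

theorem coeff_succ_Pseries (m : ℕ) : coeff (m + 1) Pseries = catalan m / (m + 1) := by
  have h := coeff_derivative Pseries m
  rw [derivative_Pseries, catalanSeriesQ, coeff_mk] at h
  rw [eq_div_iff (by positivity), ← h]

theorem catalan_div_succ_eq_factorial (m : ℕ) :
    (catalan m : ℚ) / (m + 1) = (2 * m).factorial / ((m + 1).factorial : ℚ) ^ 2 := by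
  have h : (m + 1) * catalan m * m.factorial * m.factorial = (2 * m).factorial := by
    rw [succ_mul_catalan_eq_centralBinom, Nat.centralBinom_eq_two_mul_choose, two_mul,
      Nat.add_choose_mul_factorial_mul_factorial]
  rw [div_eq_div_iff (by positivity) (by positivity), ← h, Nat.factorial_succ]
  push_cast
  ring

/-- The series `P(x) = 2xC(x) + log(1 − xC(x))` satisfies
`P'(x) = C(x)`; consequently `P(x) = Σ_{n≥1} (C_{n−1}/n) xⁿ = Σ_{n≥1} (2n−2)! xⁿ/(n!)²`. -/
theorem Pseries_derivative_eq_catalan :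
    d⁄dX ℚ Pseries = catalanSeriesQ ∧
      ∀ n : ℕ, 1 ≤ n →
        PowerSeries.coeff n Pseries = (catalan (n - 1) : ℚ) / n ∧
        PowerSeries.coeff n Pseries =
          (Nat.factorial (2 * n - 2) : ℚ) / (Nat.factorial n : ℚ) ^ 2 := by
  refine ⟨derivative_Pseries, fun n hn => ?_⟩
  obtain ⟨m, rfl⟩ := Nat.exists_eq_add_of_le' hn
  rw [coeff_succ_Pseries, Nat.add_sub_cancel, show 2 * (m + 1) - 2 = 2 * m by omega,
    ← catalan_div_succ_eq_factorial]
  push_cast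
  exact ⟨rfl, rfl⟩
end
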